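/- With the tensor-train projection setup (tensor A ∈ ℝ^{I₁×⋯×I_N}, orthonormal matrices Q₁,…,Q_{N−1}, the recursively defined matrices A₁,…,A_{N−1}, and the TT reconstruction B), the squared Frobenius-norm approximation error satisfies ‖A − B‖_F² ≤ Σ_{n=1}^{N−1} (‖A_n‖_F² − ‖Q_nᵀA_n‖_F²). -/

import Mathlib

open Matrix
open scoped BigOperators

noncomputable section

/-- Frobenius norm of a real matrix. -/
def frobNorm {m n : ℕ} (A : Matrix (Fin m) (Fin n) ℝ) : ℝ :=
  Real.sqrt (∑ i, ∑ j, A i j ^ 2)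

/-- Nonincreasing rearrangement of a finite tuple of reals. -/
def sortedDesc {n : ℕ} (f : Fin n → ℝ) : Fin n → ℝ :=
  fun k => - ((fun i => - f i) ∘ Tuple.sort (fun i => - f i)) k

/-- `sval A k` is the `(k+1)`-st largest singular value of `A` (i.e. 0-based index `k`),
the square root of the `(k+1)`-st largest eigenvalue of `AᵀA`; it is `0` for `k ≥ n`
(in particular for `k ≥ min m n`). -/
def sval {m n : ℕ} (A : Matrix (Fin m) (Fin n) ℝ) (k : ℕ) : ℝ :=
  if h : k < n then
    Real.sqrt (sortedDesc (show (Aᵀ * A).IsHermitian by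
      rw [← Matrix.conjTranspose_eq_transpose_of_trivial]
      exact Matrix.isHermitian_conjTranspose_mul_self A).eigenvalues ⟨k, h⟩)
  else 0

/-- Spectral norm (ℓ²→ℓ² operator norm) of a real matrix: its largest singular value. -/
def specNorm {m n : ℕ} (A : Matrix (Fin m) (Fin n) ℝ) : ℝ := sval A 0

/-- `tailDelta A μ = Δ_{μ+1}(A) = sqrt (Σ_{k=μ+1}^{min(m,n)} σ_k(A)²)` (with 1-based σ's,
so 0-based indices `μ, …, min m n - 1`). -/
def tailDelta {m n : ℕ} (A : Matrix (Fin m) (Fin n) ℝ) (μ : ℕ) : ℝ :=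
  Real.sqrt (∑ k ∈ Finset.Ico μ (min m n), sval A k ^ 2)

end

noncomputable section

/-- Value of a dependent tuple at a natural-number position (`0` out of range). -/
def pv {N : ℕ} {g : Fin N → ℕ} (x : (k : Fin N) → Fin (g k)) (k : ℕ) : ℕ :=
  if h : k < N then (x ⟨k, h⟩ : ℕ) else 0

/-- Mixed-radix (little-endian, MATLAB-style) linearization of the components `a, …, b-1`
(0-based) of a multi-index `x` of a tensor with dimensions `I 1, …, I N`
(the 0-based component `k` has dimension `I (k+1)`):
`ttCode I x a b = Σ_{k∈[a,b)} x_k · Π_{t∈[a,k)} I (t+1)`. -/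
def ttCode (I : ℕ → ℕ) {N : ℕ} (x : (k : Fin N) → Fin (I ((k : ℕ) + 1))) (a b : ℕ) : ℕ :=
  ∑ k ∈ Finset.Ico a b, pv x k * ∏ t ∈ Finset.Ico a k, I (t + 1)

/-- Frobenius norm of a tensor: square root of the sum of squares of all entries. -/
def tnorm {N : ℕ} {g : Fin N → ℕ} (T : ((k : Fin N) → Fin (g k)) → ℝ) : ℝ :=
  Real.sqrt (∑ x, T x ^ 2)

/-- Entry of a matrix at natural-number positions (`0` out of range). -/
def matExt {p q : ℕ} (M : Matrix (Fin p) (Fin q) ℝ) (a b : ℕ) : ℝ :=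
  if h : a < p ∧ b < q then M ⟨a, h.1⟩ ⟨b, h.2⟩ else 0

end

/-!
Write `Φₙ(x)` for the row vector `Q₁(i₁,:) Q₂(:,i₂,:) ⋯ Qₙ(:,iₙ,:)`. By induction on `n`, the
vectors `Φₙ(x)`, over the multi-indices `x` with fixed trailing part `(iₙ₊₁, …, i_N)`, are
orthonormal (because each `Qₙ` is), and `Qₙᵀ Aₙ` holds the coefficients of `A` against them.
For `n = N − 1` this makes `B` the orthogonal projection of `A` onto their span, so
`‖A − B‖² = ‖A‖² − ‖Q_{N−1}ᵀ A_{N−1}‖²`. Reshaping preserves the Frobenius norm, so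
`‖Aₙ₊₁‖ = ‖Qₙᵀ Aₙ‖` and the right-hand side telescopes to the same quantity: the bound is an
equality.
-/

open Finset

theorem Nat.add_mul_eq_add_mul_iff {a a' m c c' : ℕ} (ha : a < m) (ha' : a' < m) :
    a + m * c = a' + m * c' ↔ a = a' ∧ c = c' := by
  refine ⟨fun h => ?_, fun ⟨rfl, rfl⟩ => rfl⟩
  have hm : 0 < m := by omega
  obtain ⟨hc, ha⟩ := (Nat.div_mod_unique hm).2 ⟨h, ha⟩
  obtain ⟨hc', ha'⟩ := (Nat.div_mod_unique hm).2 ⟨rfl, ha'⟩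
  exact ⟨ha.symm.trans ha', hc.symm.trans hc'⟩

theorem Finset.sum_range_mul_eq_sum_sum {M : Type*} [AddCommMonoid M] (m p : ℕ) (f : ℕ → M) :
    ∑ a ∈ range (m * p), f a = ∑ t ∈ range m, ∑ i ∈ range p, f (t + m * i) := by
  induction p with
  | zero => simp
  | succ p ih =>
    rw [Nat.mul_succ, sum_range_add, ih, ← sum_add_distrib]
    exact sum_congr rfl fun t _ => by rw [sum_range_succ, add_comm (m * p)]

theorem Finset.sum_Icc_sub_eq_of_succ_eq {a g : ℕ → ℝ} {m k : ℕ} (hmk : m ≤ k)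
    (h : ∀ n, m ≤ n → n + 1 ≤ k → a (n + 1) = g n) :
    ∑ n ∈ Icc m k, (a n - g n) = a m - g k := by
  induction k, hmk using Nat.le_induction with
  | base => rw [Icc_self, sum_singleton]
  | succ k hk ih =>
    rw [sum_Icc_succ_top (by omega), ih fun n h1 h2 => h n h1 (by omega), h k hk le_rfl]
    ring

section MatExt

variable {p q k : ℕ}

theorem matExt_eq (M : Matrix (Fin p) (Fin q) ℝ) {a b : ℕ} (ha : a < p) (hb : b < q) :
    matExt M a b = M ⟨a, ha⟩ ⟨b, hb⟩ :=
  dif_pos ⟨ha, hb⟩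

theorem matExt_of_le_right (M : Matrix (Fin p) (Fin q) ℝ) (a : ℕ) {b : ℕ} (hb : q ≤ b) :
    matExt M a b = 0 :=
  dif_neg fun h => by omega

theorem matExt_one (s s' : ℕ) :
    matExt (1 : Matrix (Fin k) (Fin k) ℝ) s s' = if s = s' ∧ s < k then 1 else 0 := by
  by_cases h : s < k ∧ s' < k
  · rw [matExt_eq _ h.1 h.2, Matrix.one_apply]
    simp [Fin.ext_iff, h.1]
  · rw [matExt, dif_neg h, if_neg]
    rintro ⟨rfl, hs⟩
    exact h ⟨hs, hs⟩

theorem matExt_transpose_mul (P : Matrix (Fin p) (Fin k) ℝ) (M : Matrix (Fin p) (Fin q) ℝ)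
    (s b : ℕ) :
    matExt (Pᵀ * M) s b = ∑ a ∈ range p, matExt P a s * matExt M a b := by
  by_cases h : s < k ∧ b < q
  · rw [matExt_eq _ h.1 h.2, Matrix.mul_apply, ← Fin.sum_univ_eq_sum_range]
    simp only [Matrix.transpose_apply, matExt_eq _ (Fin.is_lt _) h.1,
      matExt_eq _ (Fin.is_lt _) h.2]
  · rw [matExt, dif_neg h, eq_comm]
    refine sum_eq_zero fun a _ => ?_
    rcases not_and_or.1 h with h | h <;> simp [matExt, h]

theorem frobNorm_sq_eq_sum_matExt (M : Matrix (Fin p) (Fin q) ℝ) :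
    frobNorm M ^ 2 = ∑ a ∈ range p, ∑ b ∈ range q, matExt M a b ^ 2 := by
  rw [frobNorm, Real.sq_sqrt (by positivity), ← Fin.sum_univ_eq_sum_range]
  simp only [← Fin.sum_univ_eq_sum_range (fun b => matExt M _ b ^ 2),
    matExt_eq M (Fin.is_lt _) (Fin.is_lt _)]

theorem sum_sq_eq_of_reshape (f' f : ℕ → ℕ → ℝ)
    (h : ∀ s < p, ∀ i < q, ∀ j < k, f' (s + p * i) j = f s (i + q * j)) :
    ∑ a ∈ range (p * q), ∑ j ∈ range k, f' a j ^ 2 =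
      ∑ s ∈ range p, ∑ b ∈ range (q * k), f s b ^ 2 := by
  rw [sum_range_mul_eq_sum_sum]
  refine sum_congr rfl fun s hs => ?_
  rw [sum_range_mul_eq_sum_sum]
  refine sum_congr rfl fun i hi => sum_congr rfl fun j hj => ?_
  rw [h s (mem_range.1 hs) i (mem_range.1 hi) j (mem_range.1 hj)]

theorem matExt_reshape {c : ℕ} (hc : c = q * k) (M' : Matrix (Fin (p * q)) (Fin k) ℝ)
    (M : Matrix (Fin p) (Fin c) ℝ)
    (h : ∀ (s : Fin p) (i : Fin q) (j : Fin k) (a : Fin (p * q)) (b : Fin c),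
      (a : ℕ) = s + p * i → (b : ℕ) = i + q * j → M' a j = M s b) :
    ∀ s < p, ∀ i < q, ∀ j < k, matExt M' (s + p * i) j = matExt M s (i + q * j) := by
  intro s hs i hi j hj
  have ha := Nat.add_mul_lt_mul_of_lt_of_lt hs hi
  have hb : i + q * j < c := hc ▸ Nat.add_mul_lt_mul_of_lt_of_lt hi hj
  rw [matExt_eq _ ha hj, matExt_eq _ hs hb]
  exact h ⟨s, hs⟩ ⟨i, hi⟩ ⟨j, hj⟩ _ _ rfl rfl

theorem frobNorm_sq_eq_of_reshape {c : ℕ} (hc : c = q * k)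
    (M' : Matrix (Fin (p * q)) (Fin k) ℝ) (M : Matrix (Fin p) (Fin c) ℝ)
    (h : ∀ s < p, ∀ i < q, ∀ j < k, matExt M' (s + p * i) j = matExt M s (i + q * j)) :
    frobNorm M' ^ 2 = frobNorm M ^ 2 := by
  subst hc
  rw [frobNorm_sq_eq_sum_matExt, frobNorm_sq_eq_sum_matExt, sum_sq_eq_of_reshape _ _ h]

end MatExt

section FiberSum

variable {X : Type*} [Fintype X]

def fiberSum (c : X → ℕ) (f : X → ℝ) (b : ℕ) : ℝ :=
  ∑ x, if c x = b then f x else 0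

theorem fiberSum_sum_mul {ι : Type*} (c : X → ℕ) (S : Finset ι) (a : ι → ℝ) (f : ι → X → ℝ)
    (b : ℕ) :
    fiberSum c (fun x => ∑ t ∈ S, a t * f t x) b = ∑ t ∈ S, a t * fiberSum c (f t) b := by
  simp only [fiberSum, mul_sum]
  rw [sum_comm]
  exact sum_congr rfl fun x _ => by split_ifs <;> simp

theorem sum_mul_comp_eq_sum_fiberSum {c : X → ℕ} {M : ℕ} (hc : ∀ x, c x < M) (f : X → ℝ)
    (g : ℕ → ℝ) : ∑ x, f x * g (c x) = ∑ b ∈ range M, fiberSum c f b * g b := by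
  rw [← sum_fiberwise_of_maps_to (g := c) (t := range M) fun x _ => mem_range.2 (hc x)]
  refine sum_congr rfl fun b _ => ?_
  simp only [fiberSum, sum_mul, ite_mul, zero_mul]
  rw [← sum_filter]
  exact sum_congr rfl fun x hx => by rw [(mem_filter.1 hx).2]

theorem sum_eq_sum_range_fiberSum {c : X → ℕ} {M : ℕ} (hc : ∀ x, c x < M) (f : X → ℝ) :
    ∑ x, f x = ∑ b ∈ range M, fiberSum c f b := by
  simpa using sum_mul_comp_eq_sum_fiberSum hc f fun _ => 1

/-- `B` is the orthogonal projection of `A` onto the span of the family `φ · s`, which is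
orthonormal on each fiber of `c`. -/
theorem sum_sq_sub_eq_of_orthonormal {c : X → ℕ} {M R : ℕ} (hc : ∀ x, c x < M)
    (φ : X → ℕ → ℝ) (A B : X → ℝ) (G : ℕ → ℕ → ℝ)
    (horth : ∀ b < M, ∀ s < R, ∀ s' < R,
      fiberSum c (fun x => φ x s * φ x s') b = if s = s' then 1 else 0)
    (hG : ∀ s < R, ∀ b < M, G s b = fiberSum c (fun x => φ x s * A x) b)
    (hB : ∀ x, B x = ∑ s ∈ range R, φ x s * G s (c x)) :
    ∑ x, (A x - B x) ^ 2 = ∑ x, A x ^ 2 - ∑ s ∈ range R, ∑ b ∈ range M, G s b ^ 2 := by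
  have hAB : ∑ x, A x * B x = ∑ s ∈ range R, ∑ b ∈ range M, G s b ^ 2 := by
    simp only [hB, mul_sum]
    rw [sum_comm]
    refine sum_congr rfl fun s hs => ?_
    calc ∑ x, A x * (φ x s * G s (c x)) = ∑ x, (φ x s * A x) * G s (c x) :=
          sum_congr rfl fun x _ => by ring
      _ = _ := by
        rw [sum_mul_comp_eq_sum_fiberSum hc]
        refine sum_congr rfl fun b hb => ?_
        rw [← hG s (mem_range.1 hs) b (mem_range.1 hb), sq]
  have hBB : ∑ x, B x * B x = ∑ s ∈ range R, ∑ b ∈ range M, G s b ^ 2 := by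
    simp only [hB, sum_mul_sum]
    rw [sum_comm]
    refine sum_congr rfl fun s hs => ?_
    rw [sum_comm]
    calc ∑ s' ∈ range R, ∑ x, φ x s * G s (c x) * (φ x s' * G s' (c x))
        = ∑ s' ∈ range R, ∑ b ∈ range M,
            fiberSum c (fun x => φ x s * φ x s') b * (G s b * G s' b) := by
          refine sum_congr rfl fun s' _ => ?_
          rw [← sum_mul_comp_eq_sum_fiberSum hc]
          exact sum_congr rfl fun x _ => by ring
      _ = ∑ s' ∈ range R, ∑ b ∈ range M, (if s = s' then G s b * G s' b else 0) := by
          refine sum_congr rfl fun s' hs' => sum_congr rfl fun b hb => ?_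
          rw [horth b (mem_range.1 hb) s (mem_range.1 hs) s' (mem_range.1 hs'), ite_mul,
            one_mul, zero_mul]
      _ = _ := by
          rw [sum_comm, sum_congr rfl fun b _ => sum_ite_eq (range R) s _]
          simp only [hs, if_true, sq]
  have hsq : ∀ x, (A x - B x) ^ 2 = A x ^ 2 - 2 * (A x * B x) + B x * B x := fun x => by ring
  simp only [hsq, sum_add_distrib, sum_sub_distrib, ← mul_sum, hAB, hBB]
  ring

end FiberSum

abbrev MultiIndex (I : ℕ → ℕ) (N : ℕ) : Type := (k : Fin N) → Fin (I ((k : ℕ) + 1))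

section TTCode

variable {I : ℕ → ℕ} {N : ℕ}

theorem pv_lt (x : MultiIndex I N) {k : ℕ} (hk : k < N) : pv x k < I (k + 1) := by
  rw [pv, dif_pos hk]
  exact (x ⟨k, hk⟩).isLt

theorem pv_snoc_of_lt {m : ℕ} {g : Fin (m + 1) → ℕ} (j : (i : Fin m) → Fin (g i.castSucc))
    (t : Fin (g (Fin.last m))) {k : ℕ} (hk : k < m) :
    pv (Fin.snoc (α := fun i => Fin (g i)) j t) k = pv j k := by
  rw [pv, pv, dif_pos (by omega), dif_pos hk]
  exact congrArg Fin.val (Fin.snoc_castSucc (α := fun i => Fin (g i)) t j ⟨k, hk⟩)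

theorem pv_snoc_self {m : ℕ} {g : Fin (m + 1) → ℕ} (j : (i : Fin m) → Fin (g i.castSucc))
    (t : Fin (g (Fin.last m))) : pv (Fin.snoc (α := fun i => Fin (g i)) j t) m = t := by
  rw [pv, dif_pos m.lt_succ_self]
  exact congrArg Fin.val (Fin.snoc_last (α := fun i => Fin (g i)) t j)

theorem ttCode_of_le (x : MultiIndex I N) {n : ℕ} (h : N ≤ n) : ttCode I x n N = 0 := by
  rw [ttCode, Ico_eq_empty_of_le h, sum_empty]

theorem ttCode_of_lt (x : MultiIndex I N) {n : ℕ} (h : n < N) :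
    ttCode I x n N = pv x n + I (n + 1) * ttCode I x (n + 1) N := by
  rw [ttCode, sum_eq_sum_Ico_succ_bot h, Ico_self, prod_empty, mul_one, ttCode, mul_sum]
  congr 1
  refine sum_congr rfl fun k hk => ?_
  rw [prod_eq_prod_Ico_succ_bot (mem_Ico.1 hk).1]
  ring

theorem ttCode_lt (x : MultiIndex I N) (n : ℕ) :
    ttCode I x n N < ∏ t ∈ Ico n N, I (t + 1) := by
  induction h : N - n generalizing n with
  | zero =>
    rw [ttCode_of_le x (by omega), Ico_eq_empty_of_le (by omega), prod_empty]
    exact one_pos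
  | succ d ih =>
    rw [ttCode_of_lt x (by omega), prod_eq_prod_Ico_succ_bot (by omega)]
    exact Nat.add_mul_lt_mul_of_lt_of_lt (pv_lt x (by omega)) (ih (n + 1) (by omega))

theorem ttCode_pred (x : MultiIndex I N) (hN : 0 < N) : ttCode I x (N - 1) N = pv x (N - 1) := by
  rw [ttCode_of_lt x (by omega), Nat.sub_add_cancel hN, ttCode_of_le x le_rfl, mul_zero,
    add_zero]

theorem ttCode_eq_add_mul_iff (x : MultiIndex I N) {n i b : ℕ} (hn : n < N) (hi : i < I (n + 1)) :
    ttCode I x n N = i + I (n + 1) * b ↔ pv x n = i ∧ ttCode I x (n + 1) N = b := by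
  rw [ttCode_of_lt x hn]
  exact Nat.add_mul_eq_add_mul_iff (pv_lt x hn) hi

theorem ttCode_zero_eq_finPiFinEquiv (x : MultiIndex I N) :
    ttCode I x 0 N = finPiFinEquiv x := by
  rw [finPiFinEquiv_apply, ttCode, ← range_eq_Ico, ← Fin.sum_univ_eq_sum_range]
  refine sum_congr rfl fun k _ => ?_
  rw [pv, dif_pos k.isLt, ← range_eq_Ico, ← Fin.prod_univ_eq_prod_range]
  rfl

theorem ttCode_zero_injective : Function.Injective fun x : MultiIndex I N => ttCode I x 0 N := by
  intro x y h
  simp only [ttCode_zero_eq_finPiFinEquiv] at h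
  exact finPiFinEquiv.injective (Fin.ext h)

theorem exists_ttCode_zero_eq {b : ℕ} (hb : b < ∏ t ∈ Ico 0 N, I (t + 1)) :
    ∃ x : MultiIndex I N, ttCode I x 0 N = b := by
  rw [← range_eq_Ico, ← Fin.prod_univ_eq_prod_range] at hb
  exact ⟨finPiFinEquiv.symm ⟨b, hb⟩, by simp [ttCode_zero_eq_finPiFinEquiv]⟩

theorem fiberSum_ttCode_zero (f : MultiIndex I N → ℝ) (x : MultiIndex I N) :
    fiberSum (fun y => ttCode I y 0 N) f (ttCode I x 0 N) = f x := by
  rw [fiberSum, sum_eq_single x (fun y _ hy => if_neg fun h => hy (ttCode_zero_injective h))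
    (fun h => absurd (mem_univ x) h), if_pos rfl]

theorem fiberSum_ttCode_of_le (f : MultiIndex I N → ℝ) (n : ℕ) {b : ℕ}
    (hb : ∏ t ∈ Ico n N, I (t + 1) ≤ b) : fiberSum (fun y => ttCode I y n N) f b = 0 :=
  sum_eq_zero fun x _ => if_neg fun h => (h ▸ hb).not_gt (ttCode_lt x n)

theorem fiberSum_ttCode_succ {n : ℕ} (hn : n < N) (u : ℕ → MultiIndex I N → ℝ) (b : ℕ) :
    fiberSum (fun x => ttCode I x (n + 1) N) (fun x => u (pv x n) x) b =
      ∑ i ∈ range (I (n + 1)), fiberSum (fun x => ttCode I x n N) (u i) (i + I (n + 1) * b) := by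
  simp only [fiberSum]
  rw [sum_comm]
  refine sum_congr rfl fun x _ => ?_
  rw [sum_congr rfl fun i hi => if_congr (ttCode_eq_add_mul_iff x hn (mem_range.1 hi)) rfl rfl]
  simp only [ite_and]
  rw [sum_ite_eq, if_pos (mem_range.2 (pv_lt x hn))]

end TTCode

/-- Entry `s` of `Φₙ(x) = Q₁(i₁,:) Q₂(:,i₂,:) ⋯ Qₙ(:,iₙ,:)`, with `Φ₀ = (1)`. -/
def leftInterface (I r : ℕ → ℕ) (Q : (n : ℕ) → Matrix (Fin (r (n - 1) * I n)) (Fin (r n)) ℝ)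
    {N : ℕ} (x : MultiIndex I N) : ℕ → ℕ → ℝ
  | 0, s => if s = 0 then 1 else 0
  | n + 1, s =>
    ∑ t ∈ range (r n), leftInterface I r Q x n t * matExt (Q (n + 1)) (t + r n * pv x n) s

/-- The product `Q₁(i₁, j₁) Q₂(j₁ + μ₁ i₂, j₂) ⋯ Qₘ(jₘ₋₁ + μₘ₋₁ iₘ, jₘ)` of `hB`, where
`jₙ = p (n - 1)`. -/
def pathWeight (I r : ℕ → ℕ) (Q : (n : ℕ) → Matrix (Fin (r (n - 1) * I n)) (Fin (r n)) ℝ)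
    {N : ℕ} (x : MultiIndex I N) (p : ℕ → ℕ) (m : ℕ) : ℝ :=
  ∏ nn ∈ range m, matExt (Q (nn + 1)) ((if nn = 0 then 0 else p (nn - 1)) + r nn * pv x nn) (p nn)

section LeftInterface

variable {I r : ℕ → ℕ} {Q : (n : ℕ) → Matrix (Fin (r (n - 1) * I n)) (Fin (r n)) ℝ} {N : ℕ}

theorem fiberSum_leftInterface_succ {n : ℕ} (hn : n < N) (w : ℕ → MultiIndex I N → ℝ) (s b : ℕ) :
    fiberSum (fun x => ttCode I x (n + 1) N)
        (fun x => leftInterface I r Q x (n + 1) s * w (pv x n) x) b =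
      ∑ t ∈ range (r n), ∑ i ∈ range (I (n + 1)), matExt (Q (n + 1)) (t + r n * i) s *
        fiberSum (fun x => ttCode I x n N) (fun x => leftInterface I r Q x n t * w i x)
          (i + I (n + 1) * b) := by
  refine (fiberSum_ttCode_succ hn (fun i x => (∑ t ∈ range (r n),
    leftInterface I r Q x n t * matExt (Q (n + 1)) (t + r n * i) s) * w i x) b).trans ?_
  rw [sum_comm]
  refine sum_congr rfl fun i _ => ?_
  rw [← fiberSum_sum_mul]
  congr 1
  funext x
  rw [sum_mul]
  exact sum_congr rfl fun t _ => by ring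

theorem fiberSum_leftInterface_mul_leftInterface (hr0 : r 0 = 1) {n : ℕ}
    (hQ : ∀ m, 1 ≤ m → m ≤ n → (Q m)ᵀ * Q m = 1) (hn : n < N) {b : ℕ}
    (hb : b < ∏ t ∈ Ico n N, I (t + 1)) (s s' : ℕ) :
    fiberSum (fun x : MultiIndex I N => ttCode I x n N)
        (fun x => leftInterface I r Q x n s * leftInterface I r Q x n s') b =
      if s = s' ∧ s < r n then 1 else 0 := by
  induction n generalizing b s s' with
  | zero =>
    obtain ⟨x, rfl⟩ := exists_ttCode_zero_eq hb
    rw [fiberSum_ttCode_zero, hr0]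
    simp only [leftInterface, ite_zero_mul_ite_zero, one_mul]
    exact if_congr (by omega) rfl rfl
  | succ n ih =>
    have hn' : n < N := by omega
    have hb' : ∀ i < I (n + 1), i + I (n + 1) * b < ∏ t ∈ Ico n N, I (t + 1) := fun i hi => by
      rw [prod_eq_prod_Ico_succ_bot hn']
      exact Nat.add_mul_lt_mul_of_lt_of_lt hi hb
    refine (fiberSum_leftInterface_succ hn' (fun i x => ∑ t' ∈ range (r n),
      leftInterface I r Q x n t' * matExt (Q (n + 1)) (t' + r n * i) s') s b).trans ?_
    have hinner : ∀ t < r n, ∀ i < I (n + 1),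
        fiberSum (fun x : MultiIndex I N => ttCode I x n N) (fun x => leftInterface I r Q x n t *
          ∑ t' ∈ range (r n), leftInterface I r Q x n t' * matExt (Q (n + 1)) (t' + r n * i) s')
          (i + I (n + 1) * b) = matExt (Q (n + 1)) (t + r n * i) s' := by
      intro t ht i hi
      calc _ = fiberSum (fun x => ttCode I x n N) (fun x => ∑ t' ∈ range (r n),
            matExt (Q (n + 1)) (t' + r n * i) s' *
              (leftInterface I r Q x n t * leftInterface I r Q x n t')) (i + I (n + 1) * b) := by
            congr 1
            funext x
            rw [mul_sum]
            exact sum_congr rfl fun t' _ => by ring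
        _ = _ := by
            rw [fiberSum_sum_mul]
            simp only [ih (fun m hm hm' => hQ m hm (by omega)) hn' (hb' i hi), mul_ite, mul_one,
              mul_zero, ht, and_true]
            rw [sum_ite_eq, if_pos (mem_range.2 ht)]
    rw [sum_congr rfl fun t ht => sum_congr rfl fun i hi => by
      rw [hinner t (mem_range.1 ht) i (mem_range.1 hi)], ← sum_range_mul_eq_sum_sum (r n) _
      fun a => matExt (Q (n + 1)) a s * matExt (Q (n + 1)) a s']
    refine (matExt_transpose_mul (Q (n + 1)) (Q (n + 1)) s s').symm.trans ?_
    rw [hQ (n + 1) (by omega) le_rfl, matExt_one]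

theorem matExt_transpose_mul_eq_fiberSum {n : ℕ} (hn : n < N) (A : MultiIndex I N → ℝ)
    (A' : Matrix (Fin (r (n + 1 - 1) * I (n + 1))) (Fin (∏ t ∈ Ico (n + 1) N, I (t + 1))) ℝ)
    (hA' : ∀ t < r n, ∀ i < I (n + 1), ∀ j < ∏ t ∈ Ico (n + 1) N, I (t + 1),
      matExt A' (t + r n * i) j = fiberSum (fun x => ttCode I x n N)
        (fun x => leftInterface I r Q x n t * A x) (i + I (n + 1) * j))
    (s b : ℕ) :
    matExt ((Q (n + 1))ᵀ * A') s b =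
      fiberSum (fun x => ttCode I x (n + 1) N)
        (fun x => leftInterface I r Q x (n + 1) s * A x) b := by
  by_cases hb : b < ∏ t ∈ Ico (n + 1) N, I (t + 1)
  · rw [fiberSum_leftInterface_succ hn (fun _ x => A x), matExt_transpose_mul,
      sum_range_mul_eq_sum_sum]
    refine sum_congr rfl fun t ht => sum_congr rfl fun i hi => ?_
    exact congrArg (_ * ·) (hA' t (mem_range.1 ht) i (mem_range.1 hi) b hb)
  · rw [matExt_of_le_right _ _ (not_lt.1 hb), fiberSum_ttCode_of_le _ _ (not_lt.1 hb)]

/-- The `n = 0` instance of the hypothesis of `matExt_transpose_mul_eq_fiberSum`. -/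
theorem matExt_unfoldingOne_eq_fiberSum (hN : 0 < N) (hr0 : r 0 = 1) (A : MultiIndex I N → ℝ)
    (A₁ : Matrix (Fin (r 0 * I 1)) (Fin (∏ t ∈ Ico 1 N, I (t + 1))) ℝ)
    (hA₁ : ∀ (x : MultiIndex I N) (a : Fin (r 0 * I 1)) (b : Fin (∏ t ∈ Ico 1 N, I (t + 1))),
      (a : ℕ) = pv x 0 → (b : ℕ) = ttCode I x 1 N → A₁ a b = A x) :
    ∀ t < r 0, ∀ i < I 1, ∀ j < ∏ t ∈ Ico 1 N, I (t + 1),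
      matExt A₁ (t + r 0 * i) j = fiberSum (fun x => ttCode I x 0 N)
        (fun x => leftInterface I r Q x 0 t * A x) (i + I 1 * j) := by
  intro t ht i hi j hj
  obtain rfl : t = 0 := by omega
  obtain ⟨x, hx⟩ := exists_ttCode_zero_eq (I := I) (b := i + I 1 * j)
    (by rw [prod_eq_prod_Ico_succ_bot hN]; exact Nat.add_mul_lt_mul_of_lt_of_lt hi hj)
  obtain ⟨hx0, hx1⟩ := (ttCode_eq_add_mul_iff x hN hi).1 hx
  have ha : 0 + r 0 * i < r 0 * I 1 := by rw [hr0]; omega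
  rw [← hx, fiberSum_ttCode_zero, matExt_eq _ ha hj, leftInterface, if_pos rfl, one_mul]
  exact hA₁ x _ ⟨j, hj⟩ (by simp [hr0, hx0]) hx1.symm

theorem sum_sq_eq_frobNorm_sq_unfoldingOne (hN : 0 < N) (hr0 : r 0 = 1)
    (A : MultiIndex I N → ℝ)
    (A₁ : Matrix (Fin (r 0 * I 1)) (Fin (∏ t ∈ Ico 1 N, I (t + 1))) ℝ)
    (hA₁ : ∀ t < r 0, ∀ i < I 1, ∀ j < ∏ t ∈ Ico 1 N, I (t + 1),
      matExt A₁ (t + r 0 * i) j = fiberSum (fun x => ttCode I x 0 N)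
        (fun x => leftInterface I r Q x 0 t * A x) (i + I 1 * j)) :
    ∑ x, A x ^ 2 = frobNorm A₁ ^ 2 := by
  rw [frobNorm_sq_eq_sum_matExt, sum_sq_eq_of_reshape _ _ hA₁, hr0, sum_range_one,
    ← show ∏ t ∈ Ico 0 N, I (t + 1) = _ from prod_eq_prod_Ico_succ_bot hN _,
    sum_eq_sum_range_fiberSum (ttCode_lt · 0)]
  refine sum_congr rfl fun b hb => ?_
  obtain ⟨x, rfl⟩ := exists_ttCode_zero_eq (mem_range.1 hb)
  simp only [fiberSum_ttCode_zero, leftInterface, if_pos, one_mul]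

theorem pathWeight_congr (x : MultiIndex I N) {p p' : ℕ → ℕ} {m : ℕ}
    (h : ∀ k < m, p k = p' k) : pathWeight I r Q x p m = pathWeight I r Q x p' m := by
  refine prod_congr rfl fun nn hnn => ?_
  have hnn := mem_range.1 hnn
  rw [h nn hnn]
  split_ifs
  · rfl
  · rw [h (nn - 1) (by omega)]

theorem sum_pathWeight_mul_eq_sum_leftInterface (hr0 : r 0 = 1) (x : MultiIndex I N) (m : ℕ)
    (F : ℕ → ℝ) :
    ∑ j : (nn : Fin m) → Fin (r ((nn : ℕ) + 1)), pathWeight I r Q x (pv j) m * F (pv j (m - 1)) =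
      ∑ s ∈ range (r m), leftInterface I r Q x m s * F s := by
  induction m generalizing F with
  | zero => simp [hr0, pathWeight, leftInterface, pv]
  | succ m ih =>
    rw [← (Fin.snocEquiv _).sum_comp, Fintype.sum_prod_type, ← Fin.sum_univ_eq_sum_range]
    refine sum_congr rfl fun t _ => ?_
    set G : ℕ → ℝ := fun c => matExt (Q (m + 1)) ((if m = 0 then 0 else c) + r m * pv x m) t
    have hsnoc : ∀ j' : (i : Fin m) → Fin (r ((i : ℕ) + 1)),
        let j := Fin.snoc (α := fun i : Fin (m + 1) => Fin (r ((i : ℕ) + 1))) j' t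
        pathWeight I r Q x (pv j) (m + 1) * F (pv j m) =
          pathWeight I r Q x (pv j') m * (G (pv j' (m - 1)) * F t) := by
      intro j' j
      have hj : ∀ k < m, pv j k = pv j' k := fun k hk =>
        pv_snoc_of_lt (g := fun i : Fin (m + 1) => r ((i : ℕ) + 1)) j' t hk
      rw [pathWeight, prod_range_succ, ← pathWeight, pathWeight_congr x hj,
        pv_snoc_self (g := fun i : Fin (m + 1) => r ((i : ℕ) + 1)), mul_assoc]
      congr 3
      split_ifs
      · rfl
      · rw [hj (m - 1) (by omega)]
    refine (sum_congr rfl fun j' _ => hsnoc j').trans ((ih fun c => G c * F t).trans ?_)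
    rw [leftInterface, sum_mul]
    refine sum_congr rfl fun s hs => ?_
    have hG : G s = matExt (Q (m + 1)) (s + r m * pv x m) t := by
      rcases Nat.eq_zero_or_pos m with rfl | hm
      · rw [hr0, mem_range, Nat.lt_one_iff] at hs
        simp [G, hs]
      · simp [G, hm.ne']
    rw [hG, mul_assoc]

end LeftInterface

theorem tt_error_sq_le_sum_general
    (N : ℕ) (hN : 2 ≤ N)
    -- dimensions `I 1, …, I N` and TT-ranks `r 0 = μ₀ = 1, r 1 = μ₁, …, r N = μ_N = 1`
    (I r : ℕ → ℕ) (hr0 : r 0 = 1)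
    -- the tensor `A ∈ ℝ^{I₁ × ⋯ × I_N}` (0-based component `k` is the paper index `i_{k+1}`)
    (A : ((k : Fin N) → Fin (I ((k : ℕ) + 1))) → ℝ)
    -- the orthonormal matrices `Q n ∈ ℝ^{μ_{n-1} I_n × μ_n}` for `n = 1, …, N-1`
    (Q : (n : ℕ) → Matrix (Fin (r (n - 1) * I n)) (Fin (r n)) ℝ)
    (hQ : ∀ n, 1 ≤ n → n ≤ N - 1 → (Q n)ᵀ * Q n = 1)
    -- the matrices `A_n ∈ ℝ^{μ_{n-1} I_n × (I_{n+1} ⋯ I_N)}` for `n = 1, …, N-1`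
    (Amat : (n : ℕ) →
      Matrix (Fin (r (n - 1) * I n)) (Fin (∏ t ∈ Finset.Ico n N, I (t + 1))) ℝ)
    -- `A₁` is the first unfolding `A_{([1])}` of `A`
    (hA1 : ∀ (x : (k : Fin N) → Fin (I ((k : ℕ) + 1))) (a : Fin (r 0 * I 1))
      (b : Fin (∏ t ∈ Finset.Ico 1 N, I (t + 1))),
      (a : ℕ) = pv x 0 → (b : ℕ) = ttCode I x 1 N → Amat 1 a b = A x)
    -- for `n = 2, …, N-1`, `A_n` is the reshaping of `Q_{n-1}ᵀ A_{n-1}` merging the row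
    -- index with the `I_n` index:  `A_n(s + μ_{n-1} i, j) = (Q_{n-1}ᵀ A_{n-1})(s, i + I_n j)`
    (hrec : ∀ n, 2 ≤ n → n ≤ N - 1 →
      ∀ (s : Fin (r (n - 1))) (i : Fin (I n)) (j : Fin (∏ t ∈ Finset.Ico n N, I (t + 1)))
        (a : Fin (r (n - 1) * I n)) (b : Fin (∏ t ∈ Finset.Ico (n - 1) N, I (t + 1))),
        (a : ℕ) = (s : ℕ) + r (n - 1) * (i : ℕ) →
        (b : ℕ) = (i : ℕ) + I n * (j : ℕ) →
        Amat n a j = ((Q (n - 1))ᵀ * Amat (n - 1)) s b)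
    -- the TT reconstruction `B`, with entries
    -- `B(i₁,…,i_N) = Σ_{j₁,…,j_{N-1}} Q₁(i₁,j₁) Q₂(j₁+μ₁ i₂, j₂) ⋯
    --      Q_{N-1}(j_{N-2}+μ_{N-2} i_{N-1}, j_{N-1}) · (Q_{N-1}ᵀ A_{N-1})(j_{N-1}, i_N)`
    (B : ((k : Fin N) → Fin (I ((k : ℕ) + 1))) → ℝ)
    (hB : ∀ x, B x =
      ∑ j : (nn : Fin (N - 1)) → Fin (r ((nn : ℕ) + 1)),
        (∏ nn ∈ Finset.range (N - 1),
          matExt (Q (nn + 1)) ((if nn = 0 then 0 else pv j (nn - 1)) + r nn * pv x nn)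
            (pv j nn)) *
          matExt ((Q (N - 1))ᵀ * Amat (N - 1)) (pv j (N - 2)) (pv x (N - 1)))
    :
    tnorm (fun x => A x - B x) ^ 2 ≤
      ∑ n ∈ Finset.Icc 1 (N - 1),
        (frobNorm (Amat n) ^ 2 - frobNorm ((Q n)ᵀ * Amat n) ^ 2) := by
  have hsplit : ∀ n < N, ∏ t ∈ Ico n N, I (t + 1) = I (n + 1) * ∏ t ∈ Ico (n + 1) N, I (t + 1) :=
    fun n hn => prod_eq_prod_Ico_succ_bot hn _
  have hA₁ := matExt_unfoldingOne_eq_fiberSum (Q := Q) (by omega) hr0 A (Amat 1) hA1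
  have hreshape : ∀ n, 1 ≤ n → n + 1 ≤ N - 1 → ∀ s < r n, ∀ i < I (n + 1),
      ∀ j < ∏ t ∈ Ico (n + 1) N, I (t + 1),
      matExt (Amat (n + 1)) (s + r n * i) j = matExt ((Q n)ᵀ * Amat n) s (i + I (n + 1) * j) :=
    fun n h1 h2 => matExt_reshape (hsplit n (by omega)) _ _ (hrec (n + 1) (by omega) h2)
  have hG : ∀ n, 1 ≤ n → n ≤ N - 1 → ∀ s b, matExt ((Q n)ᵀ * Amat n) s b =
      fiberSum (fun x => ttCode I x n N) (fun x => leftInterface I r Q x n s * A x) b := by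
    intro n hn
    induction n, hn using Nat.le_induction with
    | base => exact fun _ => matExt_transpose_mul_eq_fiberSum (by omega) A (Amat 1) hA₁
    | succ n hn ih =>
      refine fun h => matExt_transpose_mul_eq_fiberSum (by omega) A _ fun t ht i hi j hj => ?_
      rw [hreshape n hn h t ht i hi j hj, ih (by omega)]
  have hproj := sum_sq_sub_eq_of_orthonormal (ttCode_lt · (N - 1)) _ A B _
    (fun b hb s hs s' _ => (fiberSum_leftInterface_mul_leftInterface hr0 hQ (by omega) hb s
      s').trans (if_congr (and_iff_left hs) rfl rfl))
    (fun s _ b _ => hG (N - 1) (by omega) le_rfl s b)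
    (fun x => by
      rw [ttCode_pred x (by omega)]
      exact (hB x).trans (sum_pathWeight_mul_eq_sum_leftInterface hr0 x (N - 1)
        fun c => matExt ((Q (N - 1))ᵀ * Amat (N - 1)) c (pv x (N - 1))))
  have htel := sum_Icc_sub_eq_of_succ_eq (a := fun n => frobNorm (Amat n) ^ 2)
    (g := fun n => frobNorm ((Q n)ᵀ * Amat n) ^ 2) (by omega : 1 ≤ N - 1)
    fun n h1 h2 => frobNorm_sq_eq_of_reshape (hsplit n (by omega)) _ _ (hreshape n h1 h2)
  rw [tnorm, Real.sq_sqrt (by positivity), hproj, htel,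
    sum_sq_eq_frobNorm_sq_unfoldingOne (by omega) hr0 A (Amat 1) hA₁,
    ← frobNorm_sq_eq_sum_matExt]

/-- TT projection squared error bound:
`‖A − B‖_F² ≤ Σ_{n=1}^{N−1} (‖A_n‖_F² − ‖Q_nᵀ A_n‖_F²)`. -/
theorem tt_error_sq_le_sum
    (N : ℕ) (hN : 2 ≤ N)
    -- dimensions `I 1, …, I N` and TT-ranks `r 0 = μ₀ = 1, r 1 = μ₁, …, r N = μ_N = 1`
    (I r : ℕ → ℕ) (hr0 : r 0 = 1) (hrN : r N = 1) (hrpos : ∀ n ≤ N, 0 < r n)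
    -- the tensor `A ∈ ℝ^{I₁ × ⋯ × I_N}` (0-based component `k` is the paper index `i_{k+1}`)
    (A : ((k : Fin N) → Fin (I ((k : ℕ) + 1))) → ℝ)
    -- the orthonormal matrices `Q n ∈ ℝ^{μ_{n-1} I_n × μ_n}` for `n = 1, …, N-1`
    (Q : (n : ℕ) → Matrix (Fin (r (n - 1) * I n)) (Fin (r n)) ℝ)
    (hQ : ∀ n, 1 ≤ n → n ≤ N - 1 → (Q n)ᵀ * Q n = 1)
    -- the matrices `A_n ∈ ℝ^{μ_{n-1} I_n × (I_{n+1} ⋯ I_N)}` for `n = 1, …, N-1`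
    (Amat : (n : ℕ) →
      Matrix (Fin (r (n - 1) * I n)) (Fin (∏ t ∈ Finset.Ico n N, I (t + 1))) ℝ)
    -- `A₁` is the first unfolding `A_{([1])}` of `A`
    (hA1 : ∀ (x : (k : Fin N) → Fin (I ((k : ℕ) + 1))) (a : Fin (r 0 * I 1))
      (b : Fin (∏ t ∈ Finset.Ico 1 N, I (t + 1))),
      (a : ℕ) = pv x 0 → (b : ℕ) = ttCode I x 1 N → Amat 1 a b = A x)
    -- for `n = 2, …, N-1`, `A_n` is the reshaping of `Q_{n-1}ᵀ A_{n-1}` merging the row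
    -- index with the `I_n` index:  `A_n(s + μ_{n-1} i, j) = (Q_{n-1}ᵀ A_{n-1})(s, i + I_n j)`
    (hrec : ∀ n, 2 ≤ n → n ≤ N - 1 →
      ∀ (s : Fin (r (n - 1))) (i : Fin (I n)) (j : Fin (∏ t ∈ Finset.Ico n N, I (t + 1)))
        (a : Fin (r (n - 1) * I n)) (b : Fin (∏ t ∈ Finset.Ico (n - 1) N, I (t + 1))),
        (a : ℕ) = (s : ℕ) + r (n - 1) * (i : ℕ) →
        (b : ℕ) = (i : ℕ) + I n * (j : ℕ) →
        Amat n a j = ((Q (n - 1))ᵀ * Amat (n - 1)) s b)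
    -- the TT reconstruction `B`, with entries
    -- `B(i₁,…,i_N) = Σ_{j₁,…,j_{N-1}} Q₁(i₁,j₁) Q₂(j₁+μ₁ i₂, j₂) ⋯
    --      Q_{N-1}(j_{N-2}+μ_{N-2} i_{N-1}, j_{N-1}) · (Q_{N-1}ᵀ A_{N-1})(j_{N-1}, i_N)`
    (B : ((k : Fin N) → Fin (I ((k : ℕ) + 1))) → ℝ)
    (hB : ∀ x, B x =
      ∑ j : (nn : Fin (N - 1)) → Fin (r ((nn : ℕ) + 1)),
        (∏ nn ∈ Finset.range (N - 1),
          matExt (Q (nn + 1)) ((if nn = 0 then 0 else pv j (nn - 1)) + r nn * pv x nn)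
            (pv j nn)) *
          matExt ((Q (N - 1))ᵀ * Amat (N - 1)) (pv j (N - 2)) (pv x (N - 1)))
    :
    tnorm (fun x => A x - B x) ^ 2 ≤
      ∑ n ∈ Finset.Icc 1 (N - 1),
        (frobNorm (Amat n) ^ 2 - frobNorm ((Q n)ᵀ * Amat n) ^ 2) :=
  tt_error_sq_le_sum_general N hN I r hr0 A Q hQ Amat hA1 hrec B hB
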